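/- For the three-dimensional B2-crystal model, if L>2 then the infimum of the energy E_L over admissible pairs satisfying the horizontal-shear boundary condition is zero; in fact there exists an admissible pair (u,β) with E_L(u,β)=0. -/

import Mathlib

open MeasureTheory Set Filter Topology
open scoped ENNReal NNReal

noncomputable section

abbrev Pt3 := Fin 3 → ℝ
abbrev Mat3 := Matrix (Fin 3) (Fin 3) ℝ

/-- The box Ω_L = (0,1) × (0,L) × (0,1). -/
def Omega3 (L : ℝ) : Set Pt3 :=
  {x | x 0 ∈ Ioo (0:ℝ) 1 ∧ x 1 ∈ Ioo (0:ℝ) L ∧ x 2 ∈ Ioo (0:ℝ) 1}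

/-- Partial derivative ∂_j of a scalar function on ℝ³. -/
def pd3 (j : Fin 3) (f : Pt3 → ℝ) (x : Pt3) : ℝ := fderiv ℝ f x (Pi.single j 1)

/-- C¹ test function compactly supported in Ω_L. -/
def IsTest3 (L : ℝ) (f : Pt3 → ℝ) : Prop :=
  ContDiff ℝ 1 f ∧ HasCompactSupport f ∧ tsupport f ⊆ Omega3 L

/-- Du is the weak (distributional) gradient of u on Ω_L. -/
def IsWeakGradient3 (L : ℝ) (u : Pt3 → Pt3) (Du : Pt3 → Mat3) : Prop :=
  ∀ f : Pt3 → ℝ, IsTest3 L f → ∀ i j,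
    ∫ x in Omega3 L, u x i * pd3 j f x = - ∫ x in Omega3 L, Du x i j * f x

/-- Symmetric part of a matrix. -/
def symPart3 (M : Mat3) : Mat3 := (2:ℝ)⁻¹ • (M + M.transpose)

/-- Squared Frobenius norm. -/
def normSq3 (M : Mat3) : ℝ := ∑ i, ∑ j, (M i j) ^ 2

/-- The rotated orthonormal slip-plane frame:
e_ξ = (1,1,0)/√2, e_η = (-1,1,0)/√2, e_ζ = (0,0,1). -/
def eXi3 : Pt3 := ![1 / Real.sqrt 2, 1 / Real.sqrt 2, 0]
def eEta3 : Pt3 := ![-(1 / Real.sqrt 2), 1 / Real.sqrt 2, 0]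
def eZeta3 : Pt3 := ![0, 0, 1]

/-- Relaxed single-slip condition: a.e. β(x) = b ⊗ e for one of the three slip-plane
normals e and some Burgers vector b orthogonal to e. -/
def SingleSlip3 (L : ℝ) (β : Pt3 → Mat3) : Prop :=
  ∀ᵐ x ∂(volume.restrict (Omega3 L)),
    ∃ e ∈ ({eXi3, eEta3, eZeta3} : Set Pt3), ∃ b : Pt3,
      (∑ k, b k * e k) = 0 ∧ ∀ i j, β x i j = b i * e j

/-- Curl of the i-th row of the matrix test field Φ. -/
def curlRow (Φ : Pt3 → Mat3) (i : Fin 3) (x : Pt3) : Fin 3 → ℝ :=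
  ![pd3 1 (fun y => Φ y i 2) x - pd3 2 (fun y => Φ y i 1) x,
    pd3 2 (fun y => Φ y i 0) x - pd3 0 (fun y => Φ y i 2) x,
    pd3 0 (fun y => Φ y i 1) x - pd3 1 (fun y => Φ y i 0) x]

/-- Total variation of the row-wise distributional curl of β on Ω_L. -/
def TVcurl3 (L : ℝ) (β : Pt3 → Mat3) : ℝ≥0∞ :=
  sSup {t | ∃ Φ : Pt3 → Mat3,
    (∀ i j, IsTest3 L (fun x => Φ x i j)) ∧ (∀ x i j, Φ x i j ∈ Icc (-1:ℝ) 1) ∧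
    t = ENNReal.ofReal (∑ i, ∫ x in Omega3 L, ∑ j, β x i j * curlRow Φ i x j)}

/-- The elastic part of the energy. -/
def Elastic3 (L : ℝ) (Du β : Pt3 → Mat3) : ℝ≥0∞ :=
  ∫⁻ x in Omega3 L, ENNReal.ofReal (normSq3 (symPart3 (Du x - β x)))

/-- The energy E_L(u,β) (expressed through the weak gradient Du of u). -/
def Energy3 (L σ : ℝ) (Du β : Pt3 → Mat3) : ℝ≥0∞ :=
  Elastic3 L Du β + ENNReal.ofReal σ * TVcurl3 L β

/-- Admissible pair (u,β) with Du the weak gradient of u, including the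
horizontal-shear boundary condition u = 0 at x₂ = 0, u = γ(1,0,0) at x₂ = L. -/
def IsAdmissible3 (L γ : ℝ) (u : Pt3 → Pt3) (Du β : Pt3 → Mat3) : Prop :=
  ContinuousOn u (closure (Omega3 L)) ∧
  IsWeakGradient3 L u Du ∧
  (∀ i j, MemLp (fun x => Du x i j) 2 (volume.restrict (Omega3 L))) ∧
  (∀ i j, LocallyIntegrableOn (fun x => β x i j) (Omega3 L)) ∧
  SingleSlip3 L β ∧
  (∀ x ∈ closure (Omega3 L), x 1 = 0 → u x = 0) ∧
  (∀ x ∈ closure (Omega3 L), x 1 = L → u x = γ • ![1, 0, 0])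

/-!
Take `β = ∇u` for a smooth displacement `u`: the elastic energy vanishes and the curl of a
gradient is zero, so it remains to find `u` with the boundary values whose gradient is
single-slip. With `d = (L - 2) / 2` and smooth ramps `ρ₁`, `ρ₂` rising from 0 to 1 on `[0, d]`
and `[d + 2, 2d + 2]`, let
`u(x) = (γ/2) (ρ₁(x₂ - x₁) (1,1,0) + ρ₂(x₂ + x₁) (1,-1,0))`.
Each summand has a rank-one gradient `b ⊗ e` with `e = e_η` resp. `e_ξ` and `b ⊥ e`, and since
`x₂ + x₁ < (x₂ - x₁) + 2` in `Ω_L`, the two transition layers never meet. On `{x₂ = 0}` both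
ramps vanish, on `{x₂ = L}` both equal 1, and `(γ/2)((1,1,0) + (1,-1,0)) = γ(1,0,0)`.
-/

open scoped ContDiff

section IntegrationByParts

variable {E : Type*} [NormedAddCommGroup E] [NormedSpace ℝ E] [MeasurableSpace E] [BorelSpace E]
  {μ : Measure E}

theorem integrable_mul_fderiv_of_hasCompactSupport [IsFiniteMeasureOnCompacts μ] {a F : E → ℝ}
    (ha : Continuous a) (hF : ContDiff ℝ 1 F) (hFc : HasCompactSupport F) (v : E) :
    Integrable (fun x ↦ a x * fderiv ℝ F x v) μ :=
  (ha.mul ((hF.continuous_fderiv one_ne_zero).clm_apply continuous_const))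
    |>.integrable_of_hasCompactSupport (hFc.fderiv_apply (𝕜 := ℝ) v).mul_left

variable [FiniteDimensional ℝ E] [μ.IsAddHaarMeasure]

theorem integral_mul_fderiv_eq_neg_fderiv_mul_of_hasCompactSupport {a F : E → ℝ}
    (ha : ContDiff ℝ 1 a) (hF : ContDiff ℝ 1 F) (hFc : HasCompactSupport F) (v : E) :
    ∫ x, a x * fderiv ℝ F x v ∂μ = -∫ x, fderiv ℝ a x v * F x ∂μ :=
  integral_mul_fderiv_eq_neg_fderiv_mul_of_integrable
    (((ha.continuous_fderiv one_ne_zero).clm_apply continuous_const).mul hF.continuous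
      |>.integrable_of_hasCompactSupport hFc.mul_left)
    (integrable_mul_fderiv_of_hasCompactSupport ha.continuous hF hFc v)
    ((ha.continuous.mul hF.continuous).integrable_of_hasCompactSupport hFc.mul_left)
    (fun x _ ↦ ha.differentiable one_ne_zero x) (fun x _ ↦ hF.differentiable one_ne_zero x)

/-- Two integrations by parts and the symmetry of second derivatives. -/
theorem integral_fderiv_mul_fderiv_sub_fderiv_mul_fderiv_eq_zero {w F : E → ℝ}
    (hw : ContDiff ℝ 2 w) (hF : ContDiff ℝ 1 F) (hFc : HasCompactSupport F) (u v : E) :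
    ∫ x, (fderiv ℝ w x u * fderiv ℝ F x v - fderiv ℝ w x v * fderiv ℝ F x u) ∂μ = 0 := by
  have hdw : ContDiff ℝ 1 (fderiv ℝ w) := hw.fderiv_right le_rfl
  have hw' (e : E) : ContDiff ℝ 1 (fun x ↦ fderiv ℝ w x e) := hdw.clm_apply contDiff_const
  have hsymm (x : E) :
      fderiv ℝ (fun y ↦ fderiv ℝ w y u) x v = fderiv ℝ (fun y ↦ fderiv ℝ w y v) x u := by
    have hd := hdw.differentiable one_ne_zero x
    rw [fderiv_clm_apply hd (differentiableAt_const _),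
      fderiv_clm_apply hd (differentiableAt_const _)]
    simpa using (hw.contDiffAt.isSymmSndFDerivAt (by simp)).eq v u
  rw [integral_sub (integrable_mul_fderiv_of_hasCompactSupport (hw' u).continuous hF hFc v)
      (integrable_mul_fderiv_of_hasCompactSupport (hw' v).continuous hF hFc u),
    integral_mul_fderiv_eq_neg_fderiv_mul_of_hasCompactSupport (hw' u) hF hFc,
    integral_mul_fderiv_eq_neg_fderiv_mul_of_hasCompactSupport (hw' v) hF hFc]
  simp [hsymm]

end IntegrationByParts

theorem Continuous.memLp_restrict_of_isBounded {X F : Type*} [PseudoMetricSpace X] [ProperSpace X]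
    [MeasurableSpace X] [OpensMeasurableSpace X] {μ : Measure X} [IsFiniteMeasureOnCompacts μ]
    [NormedAddCommGroup F] {f : X → F} (hf : Continuous f) {s : Set X}
    (hs : Bornology.IsBounded s) (p : ℝ≥0∞) : MemLp f p (μ.restrict s) := by
  have hK := hs.isCompact_closure
  obtain ⟨C, hC⟩ := hK.exists_bound_of_continuousOn hf.continuousOn
  have : IsFiniteMeasure (μ.restrict (closure s)) :=
    isFiniteMeasure_restrict.2 hK.measure_lt_top.ne
  exact (MemLp.of_bound hf.aestronglyMeasurable C
    ((ae_restrict_iff' isClosed_closure.measurableSet).2 (ae_of_all _ hC))).mono_measure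
    (Measure.restrict_mono subset_closure le_rfl)

theorem measurableSet_Omega3 (L : ℝ) : MeasurableSet (Omega3 L) := by
  unfold Omega3; measurability

theorem isBounded_Omega3 (L : ℝ) : Bornology.IsBounded (Omega3 L) := by
  refine (Metric.isBounded_Icc (0 : Pt3) fun _ ↦ max 1 L).subset fun x ⟨h0, h1, h2⟩ ↦
    ⟨fun i ↦ ?_, fun i ↦ ?_⟩ <;> fin_cases i <;> simp <;> grind

theorem closure_Omega3_subset (L : ℝ) : closure (Omega3 L) ⊆ {x | x 0 ∈ Icc 0 1} :=
  closure_minimal (fun _ hx ↦ Ioo_subset_Icc_self hx.1) (isClosed_Icc.preimage (continuous_apply 0))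

theorem continuous_pd3 {f : Pt3 → ℝ} (hf : ContDiff ℝ 1 f) (j : Fin 3) : Continuous (pd3 j f) :=
  (hf.continuous_fderiv one_ne_zero).clm_apply continuous_const

namespace IsTest3

variable {L : ℝ} {F : Pt3 → ℝ} {x : Pt3}

theorem eq_zero_of_notMem (hF : IsTest3 L F) (hx : x ∉ Omega3 L) : F x = 0 :=
  image_eq_zero_of_notMem_tsupport fun h ↦ hx (hF.2.2 h)

theorem pd3_eq_zero_of_notMem (hF : IsTest3 L F) (hx : x ∉ Omega3 L) (j : Fin 3) :
    pd3 j F x = 0 := by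
  rw [pd3, fderiv_of_notMem_tsupport ℝ fun h ↦ hx (hF.2.2 h), zero_apply]

end IsTest3

def grad3 (u : Pt3 → Pt3) (x : Pt3) : Mat3 := Matrix.of fun i j ↦ pd3 j (fun y ↦ u y i) x

@[simp]
theorem grad3_apply (u : Pt3 → Pt3) (x : Pt3) (i j : Fin 3) :
    grad3 u x i j = pd3 j (fun y ↦ u y i) x :=
  rfl

section ClassicalGradient

variable {L : ℝ} {u : Pt3 → Pt3}

theorem isWeakGradient3_grad3 (hu : ∀ i, ContDiff ℝ 1 fun x ↦ u x i) :
    IsWeakGradient3 L u (grad3 u) := by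
  intro F hF i j
  rw [setIntegral_eq_integral_of_forall_compl_eq_zero fun x hx ↦ by
      rw [hF.pd3_eq_zero_of_notMem hx, mul_zero],
    setIntegral_eq_integral_of_forall_compl_eq_zero fun x hx ↦ by
      rw [hF.eq_zero_of_notMem hx, mul_zero]]
  exact integral_mul_fderiv_eq_neg_fderiv_mul_of_hasCompactSupport (hu i) hF.1 hF.2.1 _

theorem setIntegral_pd3_mul_pd3_sub_pd3_mul_pd3_eq_zero {w F : Pt3 → ℝ} (hw : ContDiff ℝ 2 w)
    (hF : IsTest3 L F) (k l : Fin 3) :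
    ∫ x in Omega3 L, (pd3 k w x * pd3 l F x - pd3 l w x * pd3 k F x) = 0 := by
  rw [setIntegral_eq_integral_of_forall_compl_eq_zero fun x hx ↦ by
    simp [hF.pd3_eq_zero_of_notMem hx]]
  exact integral_fderiv_mul_fderiv_sub_fderiv_mul_fderiv_eq_zero hw hF.1 hF.2.1 _ _

theorem setIntegral_pd3_mul_curlRow_eq_zero {w : Pt3 → ℝ} (hw : ContDiff ℝ 2 w)
    {Φ : Pt3 → Mat3} {i : Fin 3} (hΦ : ∀ j, IsTest3 L fun x ↦ Φ x i j) :
    ∫ x in Omega3 L, ∑ j, pd3 j w x * curlRow Φ i x j = 0 := by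
  set P : Fin 3 → Fin 3 → Fin 3 → Pt3 → ℝ := fun m k l x ↦
    pd3 k w x * pd3 l (Φ · i m) x - pd3 l w x * pd3 k (Φ · i m) x with hP
  -- each component `Φ i m` enters the curl through one antisymmetric pair `∂ₖw ∂ₗF - ∂ₗw ∂ₖF`
  have hsplit : (fun x ↦ ∑ j, pd3 j w x * curlRow Φ i x j) =
      P 2 0 1 + P 0 1 2 + P 1 2 0 := by
    funext x
    simp only [hP, Pi.add_apply, curlRow, Fin.sum_univ_three, Matrix.cons_val]
    ring
  have hint (m k l : Fin 3) : IntegrableOn (P m k l) (Omega3 L) :=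
    have hw1 : ContDiff ℝ 1 w := hw.of_le one_le_two
    ((integrable_mul_fderiv_of_hasCompactSupport (continuous_pd3 hw1 k) (hΦ m).1 (hΦ m).2.1 _).sub
      (integrable_mul_fderiv_of_hasCompactSupport (continuous_pd3 hw1 l) (hΦ m).1 (hΦ m).2.1 _)
      ).integrableOn
  rw [hsplit, integral_add' ((hint 2 0 1).add (hint 0 1 2)) (hint 1 2 0),
    integral_add' (hint 2 0 1) (hint 0 1 2)]
  simp only [hP, setIntegral_pd3_mul_pd3_sub_pd3_mul_pd3_eq_zero hw (hΦ _), add_zero]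

variable (hu : ∀ i, ContDiff ℝ 2 fun x ↦ u x i)
include hu

theorem TVcurl3_grad3 : TVcurl3 L (grad3 u) = 0 := by
  refine nonpos_iff_eq_zero.1 (sSup_le ?_)
  rintro _ ⟨Φ, hΦ, -, rfl⟩
  simp [setIntegral_pd3_mul_curlRow_eq_zero (hu _) (hΦ _)]

theorem energy3_grad3 (σ : ℝ) : Energy3 L σ (grad3 u) (grad3 u) = 0 := by
  simp [Energy3, Elastic3, symPart3, normSq3, TVcurl3_grad3 hu]

theorem isAdmissible3_grad3 {γ : ℝ} (hslip : SingleSlip3 L (grad3 u))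
    (hbot : ∀ x ∈ closure (Omega3 L), x 1 = 0 → u x = 0)
    (htop : ∀ x ∈ closure (Omega3 L), x 1 = L → u x = γ • ![1, 0, 0]) :
    IsAdmissible3 L γ u (grad3 u) (grad3 u) := by
  have hu1 (i : Fin 3) : ContDiff ℝ 1 fun x ↦ u x i := (hu i).of_le one_le_two
  refine ⟨(continuous_pi fun i ↦ (hu i).continuous).continuousOn, isWeakGradient3_grad3 hu1,
    fun i j ↦ ?_, fun i j ↦ ?_, hslip, hbot, htop⟩
  · exact (continuous_pd3 (hu1 i) j).memLp_restrict_of_isBounded (isBounded_Omega3 L) 2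
  · exact (continuous_pd3 (hu1 i) j).continuousOn.locallyIntegrableOn (measurableSet_Omega3 L)

end ClassicalGradient

def ramp (a d t : ℝ) : ℝ := Real.smoothTransition ((t - a) / d)

section Ramp

variable {a d t : ℝ}

theorem contDiff_ramp (a d : ℝ) {k : ℕ∞} : ContDiff ℝ k (ramp a d) :=
  Real.smoothTransition.contDiff.comp ((contDiff_id.sub contDiff_const).div_const d)

theorem ramp_of_le (hd : 0 ≤ d) (ht : t ≤ a) : ramp a d t = 0 :=
  Real.smoothTransition.zero_of_nonpos (div_nonpos_of_nonpos_of_nonneg (by linarith) hd)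

theorem ramp_of_ge (hd : 0 < d) (ht : a + d ≤ t) : ramp a d t = 1 :=
  Real.smoothTransition.one_of_one_le ((one_le_div hd).2 (by linarith))

theorem deriv_ramp_of_lt (hd : 0 ≤ d) (ht : t < a) : deriv (ramp a d) t = 0 := by
  have : ramp a d =ᶠ[𝓝 t] fun _ ↦ 0 :=
    eventuallyEq_of_mem (Iio_mem_nhds ht) fun _ hs ↦ ramp_of_le hd (le_of_lt hs)
  rw [this.deriv_eq, deriv_const]

theorem deriv_ramp_of_gt (hd : 0 < d) (ht : a + d < t) : deriv (ramp a d) t = 0 := by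
  have : ramp a d =ᶠ[𝓝 t] fun _ ↦ 1 :=
    eventuallyEq_of_mem (Ioi_mem_nhds ht) fun _ hs ↦ ramp_of_ge hd (le_of_lt hs)
  rw [this.deriv_eq, deriv_const]

end Ramp

def planeWave (g : ℝ → ℝ) (n a : Pt3) (x : Pt3) : Pt3 := g (n ⬝ᵥ x) • a

section PlaneWave

variable {g : ℝ → ℝ} {n a : Pt3}

theorem hasFDerivAt_dotProduct {ι : Type*} [Fintype ι] (n x : ι → ℝ) :
    HasFDerivAt (fun y ↦ n ⬝ᵥ y) (LinearMap.toContinuousLinearMap (dotProductBilin ℝ ℝ n)) x :=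
  (LinearMap.toContinuousLinearMap (dotProductBilin ℝ ℝ n)).hasFDerivAt

theorem contDiff_planeWave_apply {k : WithTop ℕ∞} (hg : ContDiff ℝ k g) (i : Fin 3) :
    ContDiff ℝ k fun x ↦ planeWave g n a x i :=
  (hg.comp (LinearMap.toContinuousLinearMap (dotProductBilin ℝ ℝ n)).contDiff).mul contDiff_const

theorem grad3_planeWave (hg : Differentiable ℝ g) (x : Pt3) :
    grad3 (planeWave g n a) x = deriv g (n ⬝ᵥ x) • Matrix.vecMulVec a n := by
  ext i j
  have h : HasFDerivAt (fun y ↦ planeWave g n a y i)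
      (a i • deriv g (n ⬝ᵥ x) • LinearMap.toContinuousLinearMap (dotProductBilin ℝ ℝ n)) x :=
    ((hg _).hasDerivAt.comp_hasFDerivAt x (hasFDerivAt_dotProduct n x)).mul_const (a i)
  simp only [grad3_apply, pd3, h.fderiv]
  simp [Matrix.vecMulVec_apply]
  ring

theorem grad3_add {u v : Pt3 → Pt3} {x : Pt3} (hu : ∀ i, DifferentiableAt ℝ (fun y ↦ u y i) x)
    (hv : ∀ i, DifferentiableAt ℝ (fun y ↦ v y i) x) :
    grad3 (u + v) x = grad3 u x + grad3 v x := by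
  ext i j
  simp [pd3, fderiv_fun_add (hu i) (hv i)]

end PlaneWave

theorem sqrt_two_smul_eXi3 : Real.sqrt 2 • eXi3 = ![1, 1, 0] := by
  ext i; fin_cases i <;> simp [eXi3]

theorem sqrt_two_smul_eEta3 : Real.sqrt 2 • eEta3 = ![-1, 1, 0] := by
  ext i; fin_cases i <;> simp [eEta3]

theorem singleSlip3_of_forall_mem {L : ℝ} {β : Pt3 → Mat3}
    (h : ∀ x ∈ Omega3 L, ∃ e ∈ ({eXi3, eEta3, eZeta3} : Set Pt3), ∃ b : Pt3,
      b ⬝ᵥ e = 0 ∧ β x = Matrix.vecMulVec b e) :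
    SingleSlip3 L β := by
  filter_upwards [ae_restrict_mem (measurableSet_Omega3 L)] with x hx
  obtain ⟨e, he, b, hbe, hβ⟩ := h x hx
  exact ⟨e, he, b, hbe, fun i j ↦ by rw [hβ, Matrix.vecMulVec_apply]⟩

def shearField (d γ : ℝ) : Pt3 → Pt3 :=
  planeWave (ramp 0 d) ![-1, 1, 0] ((γ / 2) • ![1, 1, 0]) +
    planeWave (ramp (d + 2) d) ![1, 1, 0] ((γ / 2) • ![1, -1, 0])

section ShearField

variable {d γ : ℝ} {x : Pt3}

theorem shearField_apply (d γ : ℝ) (x : Pt3) :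
    shearField d γ x = ramp 0 d (x 1 - x 0) • (γ / 2) • ![1, 1, 0] +
      ramp (d + 2) d (x 1 + x 0) • (γ / 2) • ![1, -1, 0] := by
  simp only [shearField, Pi.add_apply, planeWave, dotProduct, Fin.sum_univ_three]
  congr 3 <;> simp <;> ring

theorem contDiff_shearField_apply (d γ : ℝ) {k : ℕ∞} (i : Fin 3) :
    ContDiff ℝ k fun x ↦ shearField d γ x i :=
  (contDiff_planeWave_apply (contDiff_ramp 0 d) i).add
    (contDiff_planeWave_apply (contDiff_ramp (d + 2) d) i)

theorem grad3_shearField (d γ : ℝ) (x : Pt3) :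
    grad3 (shearField d γ) x =
      deriv (ramp 0 d) (x 1 - x 0) • Matrix.vecMulVec ((γ / 2) • ![1, 1, 0]) ![-1, 1, 0] +
        deriv (ramp (d + 2) d) (x 1 + x 0) •
          Matrix.vecMulVec ((γ / 2) • ![1, -1, 0]) ![1, 1, 0] := by
  have hdiff (a : ℝ) : Differentiable ℝ (ramp a d) :=
    (contDiff_ramp a d (k := 1)).differentiable one_ne_zero
  have hwave (a : ℝ) (n b : Pt3) (i : Fin 3) :
      DifferentiableAt ℝ (fun y ↦ planeWave (ramp a d) n b y i) x :=
    (contDiff_planeWave_apply (contDiff_ramp a d (k := 1)) i).differentiable one_ne_zero x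
  rw [shearField, grad3_add (hwave _ _ _) (hwave _ _ _), grad3_planeWave (hdiff 0),
    grad3_planeWave (hdiff (d + 2))]
  congr 3 <;> simp [dotProduct, Fin.sum_univ_three] <;> ring

theorem shearField_eq_zero (hd : 0 ≤ d) (hx0 : x 0 ∈ Icc 0 1) (hx1 : x 1 = 0) :
    shearField d γ x = 0 := by
  rw [shearField_apply, ramp_of_le hd (by linarith [hx0.1]), ramp_of_le hd (by linarith [hx0.2])]
  simp

theorem shearField_eq_smul (hd : 0 < d) (hx0 : x 0 ∈ Icc 0 1) (hx1 : x 1 = 2 * d + 2) :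
    shearField d γ x = γ • ![1, 0, 0] := by
  rw [shearField_apply, ramp_of_ge hd (by linarith [hx0.2]), ramp_of_ge hd (by linarith [hx0.1])]
  ext i; fin_cases i <;> simp

theorem singleSlip3_grad3_shearField (hd : 0 < d) (L : ℝ) :
    SingleSlip3 L (grad3 (shearField d γ)) := by
  refine singleSlip3_of_forall_mem fun x hx ↦ ?_
  rw [grad3_shearField]
  by_cases hs : x 1 - x 0 ≤ d
  · rw [deriv_ramp_of_lt (a := d + 2) (t := x 1 + x 0) hd.le (by linarith [hx.1.2]), zero_smul,
      add_zero, ← sqrt_two_smul_eEta3]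
    refine ⟨eEta3, by simp, (deriv (ramp 0 d) (x 1 - x 0) * Real.sqrt 2 * (γ / 2)) • ![1, 1, 0],
      by simp [dotProduct, Fin.sum_univ_three, eEta3], ?_⟩
    simp only [Matrix.vecMulVec_smul, Matrix.smul_vecMulVec, smul_smul]
    ring_nf
  · rw [deriv_ramp_of_gt (a := 0) hd (by linarith), zero_smul, zero_add, ← sqrt_two_smul_eXi3]
    refine ⟨eXi3, by simp, (deriv (ramp (d + 2) d) (x 1 + x 0) * Real.sqrt 2 * (γ / 2)) •
      ![1, -1, 0], by simp [dotProduct, Fin.sum_univ_three, eXi3], ?_⟩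
    simp only [Matrix.vecMulVec_smul, Matrix.smul_vecMulVec, smul_smul]
    ring_nf

end ShearField

theorem three_d_zero_energy_general (L σ γ : ℝ) (hL : 2 < L) :
    sInf {e | ∃ u Du β, IsAdmissible3 L γ u Du β ∧ TVcurl3 L β ≠ ⊤ ∧
        e = Energy3 L σ Du β} = 0 ∧
    ∃ u Du β, IsAdmissible3 L γ u Du β ∧ TVcurl3 L β ≠ ⊤ ∧ Energy3 L σ Du β = 0 := by
  obtain ⟨d, hd, hLd⟩ : ∃ d, 0 < d ∧ L = 2 * d + 2 := ⟨(L - 2) / 2, by linarith, by ring⟩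
  set u := shearField d γ
  have hu (i : Fin 3) : ContDiff ℝ 2 fun x ↦ u x i := contDiff_shearField_apply d γ i
  have hadm : IsAdmissible3 L γ u (grad3 u) (grad3 u) :=
    isAdmissible3_grad3 hu (singleSlip3_grad3_shearField hd _)
      (fun x hx hx1 ↦ shearField_eq_zero hd.le (closure_Omega3_subset L hx) hx1)
      (fun x hx hx1 ↦ shearField_eq_smul hd (closure_Omega3_subset L hx) (hx1.trans hLd))
  have hTV : TVcurl3 L (grad3 u) ≠ ⊤ := by simp [TVcurl3_grad3 hu]
  have hE := energy3_grad3 (L := L) hu σ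
  exact ⟨le_antisymm (sInf_le ⟨_, _, _, hadm, hTV, hE.symm⟩) zero_le, _, _, _, hadm, hTV, hE⟩

/-- For the three-dimensional B2-crystal model, if L > 2 then the
infimum of the energy over admissible pairs satisfying the horizontal-shear boundary
condition is zero; in fact there is an admissible pair with zero energy. -/
theorem three_d_zero_energy (L σ γ : ℝ) (hσ : 0 < σ) (hγ : 0 < γ) (hL : 2 < L) :
    sInf {e | ∃ u Du β, IsAdmissible3 L γ u Du β ∧ TVcurl3 L β ≠ ⊤ ∧
        e = Energy3 L σ Du β} = 0 ∧
    ∃ u Du β, IsAdmissible3 L γ u Du β ∧ TVcurl3 L β ≠ ⊤ ∧ Energy3 L σ Du β = 0 :=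
  three_d_zero_energy_general L σ γ hL
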